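/- Let H be symmetric PSD, and let x_{t+1} minimize ⟨x − x⋆, Q(H)(x − x⋆)⟩ over x ∈ x_0 + span{∇f(x_0), …, ∇f(x_t)}, where Q is a polynomial with Q(λ) > 0 on the positive spectrum of H. Then the corresponding polynomial P_{t+1} (with x_{t+1} − x⋆ = P_{t+1}(H)(x_0 − x⋆)) is orthogonal to ℝ_t[X] for the bilinear form ⟨P,R⟩_{XQ} = Σ_{λ∈Sp(H)} λQ(λ)⟨x_0−x⋆, v_λ⟩² P(λ)R(λ), i.e., ⟨P_{t+1}, R⟩_{XQ} = 0 for all R with deg R ≤ t. -/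

import Mathlib

open Matrix

/-- If `P` (with `P(0)=1`, `deg P ≤ t+1`) minimizes the `Q`-weighted objective among
all such polynomials, then `P` is orthogonal to all polynomials of degree ≤ t for the
`XQ`-weighted bilinear form. -/
theorem minimizer_orthogonality {d : ℕ} (H : Matrix (Fin d) (Fin d) ℝ) (hH : H.PosSemidef)
    (v : Fin d → Fin d → ℝ) (μ : Fin d → ℝ)
    (horth : ∀ i j, v i ⬝ᵥ v j = if i = j then 1 else 0)
    (heig : ∀ i, H.mulVec (v i) = μ i • v i)
    (Q : Polynomial ℝ) (hQ : ∀ i, 0 < μ i → 0 < Q.eval (μ i))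
    (xs x0 : Fin d → ℝ) (t : ℕ) (P : Polynomial ℝ)
    (hdeg : P.natDegree ≤ t + 1) (h0 : P.eval 0 = 1)
    (hmin : ∀ P' : Polynomial ℝ, P'.natDegree ≤ t + 1 → P'.eval 0 = 1 →
      ∑ i, Q.eval (μ i) * (P.eval (μ i)) ^ 2 * ((x0 - xs) ⬝ᵥ v i) ^ 2
        ≤ ∑ i, Q.eval (μ i) * (P'.eval (μ i)) ^ 2 * ((x0 - xs) ⬝ᵥ v i) ^ 2) :
    ∀ R : Polynomial ℝ, R.natDegree ≤ t →
      ∑ i, μ i * Q.eval (μ i) * ((x0 - xs) ⬝ᵥ v i) ^ 2 * P.eval (μ i) * R.eval (μ i) = 0 := by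
  intro R hR
  set w : Fin d → ℝ := fun i => (x0 - xs) ⬝ᵥ v i with hw
  set B : ℝ := ∑ i, μ i * Q.eval (μ i) * w i ^ 2 * P.eval (μ i) * R.eval (μ i) with hB
  set Cc : ℝ := ∑ i, Q.eval (μ i) * (μ i * R.eval (μ i)) ^ 2 * w i ^ 2 with hC
  have hμ : ∀ i, 0 ≤ μ i := by
    intro i
    have h2 := hH.dotProduct_mulVec_nonneg (v i)
    rw [heig i] at h2
    have : star (v i) ⬝ᵥ (μ i • v i) = μ i := by
      simp [dotProduct_smul, horth i i]
    rwa [this] at h2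
  have hCnn : 0 ≤ Cc := by
    rw [hC]
    apply Finset.sum_nonneg
    intro i _
    rcases eq_or_lt_of_le (hμ i) with h | h
    · rw [← h]; ring_nf; simp
    · have := hQ i h
      positivity
  have key : ∀ ε : ℝ, 0 ≤ 2 * ε * B + ε ^ 2 * Cc := by
    intro ε
    have hdeg' : (P + Polynomial.C ε * (Polynomial.X * R)).natDegree ≤ t + 1 := by
      refine le_trans (Polynomial.natDegree_add_le _ _) (max_le hdeg ?_)
      refine le_trans (Polynomial.natDegree_C_mul_le _ _) ?_
      refine le_trans (Polynomial.natDegree_mul_le) ?_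
      have := Polynomial.natDegree_X_le (R := ℝ)
      omega
    have hev' : (P + Polynomial.C ε * (Polynomial.X * R)).eval 0 = 1 := by
      simp [h0]
    have h1 := hmin _ hdeg' hev'
    have expand : ∑ i, Q.eval (μ i) *
        ((P + Polynomial.C ε * (Polynomial.X * R)).eval (μ i)) ^ 2 * w i ^ 2
        = (∑ i, Q.eval (μ i) * (P.eval (μ i)) ^ 2 * w i ^ 2) + (2 * ε * B + ε ^ 2 * Cc) := by
      rw [hB, hC, Finset.mul_sum, Finset.mul_sum, ← Finset.sum_add_distrib,
        ← Finset.sum_add_distrib]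
      apply Finset.sum_congr rfl
      intro i _
      simp only [Polynomial.eval_add, Polynomial.eval_mul, Polynomial.eval_C, Polynomial.eval_X]
      ring
    rw [expand] at h1
    linarith
  by_contra hB0
  have hkey := key (-B / (Cc + 1))
  have hc : (0:ℝ) < Cc + 1 := by linarith
  have hBsq : 0 < B ^ 2 := by positivity
  have h2 : 2 * (-B / (Cc + 1)) * B + (-B / (Cc + 1)) ^ 2 * Cc
      = -(B ^ 2 * (Cc + 2)) / (Cc + 1) ^ 2 := by
    field_simp
    ring
  rw [h2] at hkey
  have h3 : -(B ^ 2 * (Cc + 2)) / (Cc + 1) ^ 2 < 0 := by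
    apply div_neg_of_neg_of_pos _ (by positivity)
    nlinarith
  linarith
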